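/- Let Σ consist of a binary symbol f, a unary symbol C, and constants a, b, D, and let R be the TRS with rules f(x,x) → D, a → C(a), b → C(b). Then the infinitary reduction f(a,b) →∞ D cannot be compressed to length at most ω: ¬(f(a,b) →^{≤ω} D), where →^{≤ω} := νS.((→)* ∘ ↓S) and → is the one-step rewrite relation of R. -/

import Mathlib

open Relation

/-- A signature: a type of function symbols together with an arity for each symbol. -/
structure Signature where
  Sym : Type
  ar : Sym → ℕ

/-- The polynomial functor whose final coalgebra is the set of (finite and infinite)
terms over the signature `Sg` and the set `X` of variables. -/
def TermF (Sg : Signature) (X : Type) : PFunctor.{0} :=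
  ⟨X ⊕ Sg.Sym, fun a => Sum.rec (fun _ => Empty) (fun f => Fin (Sg.ar f)) a⟩

/-- The set `T` of finite and infinite terms over `Sg` and `X`, defined coinductively
(as the final coalgebra, i.e. the M-type, of `TermF Sg X`). -/
def Tm (Sg : Signature) (X : Type) : Type := PFunctor.M (TermF Sg X)

variable {Sg : Signature} {X : Type}

/-- The term consisting of a single variable. -/
def Tm.var (x : X) : Tm Sg X := PFunctor.M.mk ⟨Sum.inl x, Empty.elim⟩

/-- The term `f(t₁,…,tₙ)` with root symbol `f` and arguments `args`. -/
def Tm.node (f : Sg.Sym) (args : Fin (Sg.ar f) → Tm Sg X) : Tm Sg X :=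
  PFunctor.M.mk ⟨Sum.inr f, args⟩

/-- One step of the corecursive definition of substitution:
`Sum.inl t` means `t` still has to be substituted, `Sum.inr t` means `t` is copied. -/
def substAux (σ : X → Tm Sg X) :
    (Tm Sg X ⊕ Tm Sg X) → (TermF Sg X) (Tm Sg X ⊕ Tm Sg X) := fun s =>
  match s with
  | Sum.inl t =>
    match PFunctor.M.dest t with
    | ⟨Sum.inl x, _⟩ =>
        ⟨(PFunctor.M.dest (σ x)).1, fun b => Sum.inr ((PFunctor.M.dest (σ x)).2 b)⟩
    | ⟨Sum.inr f, k⟩ => ⟨Sum.inr f, fun b => Sum.inl (k b)⟩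
  | Sum.inr t =>
      ⟨(PFunctor.M.dest t).1, fun b => Sum.inr ((PFunctor.M.dest t).2 b)⟩

/-- Application `tσ` of a substitution `σ : X → T` to a term `t`, defined corecursively. -/
def subst (σ : X → Tm Sg X) (t : Tm Sg X) : Tm Sg X :=
  PFunctor.M.corec (substAux σ) (Sum.inl t)

/-- `Occurs x t`: the variable `x` occurs in the term `t`. -/
inductive Occurs (x : X) : Tm Sg X → Prop
  | here {t : Tm Sg X} : t = Tm.var x → Occurs x t
  | deeper {t : Tm Sg X} {f : Sg.Sym} {args : Fin (Sg.ar f) → Tm Sg X}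
      (i : Fin (Sg.ar f)) : t = Tm.node f args → Occurs x (args i) → Occurs x t

/-- A term rewriting system over `Sg` and `X`: a set of rules `ℓ → r` such that
`ℓ` is not a variable and all variables of `r` occur in `ℓ`. -/
structure TRS (Sg : Signature) (X : Type) where
  rules : Set (Tm Sg X × Tm Sg X)
  lhs_not_var : ∀ l r, (l, r) ∈ rules → ∀ x : X, l ≠ Tm.var x
  vars_lhs : ∀ l r, (l, r) ∈ rules → ∀ x : X, Occurs x r → Occurs x l

/-- Relations on terms. -/
abbrev TRel (Sg : Signature) (X : Type) := Tm Sg X → Tm Sg X → Prop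

/-- The root step relation `→ε := {(ℓσ, rσ) | ℓ → r ∈ R, σ a substitution}`. -/
def RootStep (R : TRS Sg X) : TRel Sg X := fun s t =>
  ∃ l r, (l, r) ∈ R.rules ∧ ∃ σ : X → Tm Sg X, s = subst σ l ∧ t = subst σ r

/-- `StepAt Q p s t`: a `Q`-step at position `p`, i.e. `s = C[u]`, `t = C[v]` with
`(u,v) ∈ Q` and `C` a one-hole context whose hole is at position `p`. -/
inductive StepAt (Q : TRel Sg X) : List ℕ → Tm Sg X → Tm Sg X → Prop
  | here {s t : Tm Sg X} : Q s t → StepAt Q [] s t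
  | deeper {f : Sg.Sym} {ss ts : Fin (Sg.ar f) → Tm Sg X} (i : Fin (Sg.ar f))
      {p : List ℕ} : StepAt Q p (ss i) (ts i) → (∀ j, j ≠ i → ss j = ts j) →
      StepAt Q ((i : ℕ) :: p) (Tm.node f ss) (Tm.node f ts)

/-- The one-step rewrite relation `→` of a TRS: a root step applied inside a
one-hole context. -/
def Step (R : TRS Sg X) : TRel Sg X := fun s t => ∃ p, StepAt (RootStep R) p s t

/-- The lifting `↓R` of a relation `R`:
`↓R := {(f(s₁,…,sₙ), f(t₁,…,tₙ)) | f ∈ Σ, s₁ R t₁, …, sₙ R tₙ} ∪ Id`. -/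
def liftRel (R : TRel Sg X) : TRel Sg X := fun s t =>
  s = t ∨ ∃ (f : Sg.Sym) (ss ts : Fin (Sg.ar f) → Tm Sg X),
    s = Tm.node f ss ∧ t = Tm.node f ts ∧ ∀ i, R (ss i) (ts i)

lemma liftRel_mono : Monotone (liftRel (Sg := Sg) (X := X)) := by
  intro R S h s t hst
  rcases hst with h1 | ⟨f, ss, ts, rfl, rfl, hi⟩
  · exact Or.inl h1
  · exact Or.inr ⟨f, ss, ts, rfl, rfl, fun i => h _ _ (hi i)⟩

/-- Relational composition `r ∘ s`. -/
def relComp (r s : TRel Sg X) : TRel Sg X := fun a c => ∃ b, r a b ∧ s b c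

/-- The monotone operator `S ↦ (→ε ∪ ↓R)* ∘ ↓S` (for a fixed `R`). -/
def iredInnerHom (R : TRS Sg X) (U : TRel Sg X) : TRel Sg X →o TRel Sg X where
  toFun S := relComp
    (ReflTransGen (fun s t => RootStep R s t ∨ liftRel U s t)) (liftRel S)
  monotone' := by
    intro S S' h a c hac
    rcases hac with ⟨b, h1, h2⟩
    exact ⟨b, h1, liftRel_mono h _ _ h2⟩

/-- The monotone operator `R ↦ νS.((→ε ∪ ↓R)* ∘ ↓S)`. -/
def iredHom (R : TRS Sg X) : TRel Sg X →o TRel Sg X where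
  toFun U := OrderHom.gfp (iredInnerHom R U)
  monotone' := by
    intro U V h
    apply OrderHom.gfp.monotone
    intro S a c hac
    rcases hac with ⟨b, h1, h2⟩
    refine ⟨b, ?_, h2⟩
    refine ReflTransGen.mono ?_ a b h1
    intro x y hxy
    exact hxy.imp id (fun h' => liftRel_mono h _ _ h')

/-- The infinitary rewrite relation `→∞ := μR.νS.((→ε ∪ ↓R)* ∘ ↓S)`. -/
def ired (R : TRS Sg X) : TRel Sg X := OrderHom.lfp (iredHom R)

/-- The monotone operator `R' ↦ (→ε ∪ ↓R')*`. -/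
def biHom (R : TRS Sg X) : TRel Sg X →o TRel Sg X where
  toFun U := ReflTransGen (fun s t => RootStep R s t ∨ liftRel U s t)
  monotone' := by
    intro U V h a b hab
    refine ReflTransGen.mono ?_ a b hab
    intro x y hxy
    exact hxy.imp id (fun h' => liftRel_mono h _ _ h')

/-- The bi-infinite rewrite relation `∞→ := νR.(→ε ∪ ↓R)*`. -/
def bired (R : TRS Sg X) : TRel Sg X := OrderHom.gfp (biHom R)

/-- The monotone operator `R' ↦ (←ε ∪ →ε ∪ ↓R')*`. -/
def ieqHom (R : TRS Sg X) : TRel Sg X →o TRel Sg X where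
  toFun U := ReflTransGen (fun s t => RootStep R t s ∨ RootStep R s t ∨ liftRel U s t)
  monotone' := by
    intro U V h a b hab
    refine ReflTransGen.mono ?_ a b hab
    intro x y hxy
    exact hxy.imp id (fun h' => h'.imp id (fun h'' => liftRel_mono h _ _ h''))

/-- The infinitary equational reasoning relation `=∞ := νR.(←ε ∪ →ε ∪ ↓R)*`. -/
def ieq (R : TRS Sg X) : TRel Sg X := OrderHom.gfp (ieqHom R)

/-- `Agree n s t`: the terms `s` and `t` coincide up to depth `n`
(i.e. `d(s,t) ≤ 2^{-n}` for the standard metric `d`). -/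
def Agree : ℕ → Tm Sg X → Tm Sg X → Prop
  | 0, _, _ => True
  | n + 1, s, t =>
      (∃ x : X, s = Tm.var x ∧ t = Tm.var x) ∨
      ∃ (f : Sg.Sym) (ss ts : Fin (Sg.ar f) → Tm Sg X),
        s = Tm.node f ss ∧ t = Tm.node f ts ∧ ∀ i, Agree n (ss i) (ts i)

/-- `ConvTo t p l tl`: as `β` approaches the ordinal `l` from below,
`d(t β, tl)` tends to `0` and the depth `|p β|` tends to infinity. -/
def ConvTo (t : Ordinal.{0} → Tm Sg X) (p : Ordinal.{0} → List ℕ) (l : Ordinal.{0})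
    (tl : Tm Sg X) : Prop :=
  (∀ n : ℕ, ∃ β₀ < l, ∀ β, β₀ ≤ β → β < l → Agree n (t β) tl) ∧
  (∀ n : ℕ, ∃ β₀ < l, ∀ β, β₀ ≤ β → β < l → n ≤ (p β).length)

/-- A transfinite sequence of `Q`-steps `(t_β →_{p_β} t_{β+1})_{β<α}` of ordinal
length `α`, weakly continuous and with depths tending to infinity at every limit
ordinal `λ < α`. -/
structure TransSeq (Q : TRel Sg X) (α : Ordinal.{0}) where
  t : Ordinal.{0} → Tm Sg X
  pos : Ordinal.{0} → List ℕ
  step : ∀ β < α, StepAt Q (pos β) (t β) (t (β + 1))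
  conv : ∀ l < α, Order.IsSuccLimit l → ConvTo t pos l (t l)

/-- A transfinite rewrite sequence is strongly convergent if its length is a successor
ordinal (or zero), or there exists a final term to which it converges (with depths
tending to infinity) at the limit. -/
def TransSeq.StronglyConvergent {Q : TRel Sg X} {α : Ordinal.{0}} (s : TransSeq Q α) : Prop :=
  Order.IsSuccLimit α → ∃ tl, ConvTo s.t s.pos α tl

/-- `SCRed Q s t`: there is a strongly convergent transfinite sequence of `Q`-steps
from `s` to `t`. -/
def SCRed (Q : TRel Sg X) : TRel Sg X := fun a b =>
  ∃ (α : Ordinal.{0}) (s : TransSeq Q α), s.t 0 = a ∧ s.t α = b ∧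
    (Order.IsSuccLimit α → ConvTo s.t s.pos α b)

/-- The standard, ordinal-based infinitary rewrite relation `→∞_ord`:
strongly convergent transfinite rewrite sequences. -/
def iredOrd (R : TRS Sg X) : TRel Sg X := SCRed (RootStep R)

-- auxiliary facts about the term constructors
lemma node_ne_var (f : Sg.Sym) (args : Fin (Sg.ar f) → Tm Sg X) (x : X) :
    Tm.node f args ≠ Tm.var x := by
  intro h
  have h1 := congrArg (fun u => (PFunctor.M.dest u).1) h
  simp only [Tm.node, Tm.var, PFunctor.M.dest_mk] at h1
  exact Sum.inr_ne_inl h1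

lemma node_inj_sym {f g : Sg.Sym} {ss : Fin (Sg.ar f) → Tm Sg X}
    {ts : Fin (Sg.ar g) → Tm Sg X} (h : Tm.node f ss = Tm.node g ts) : f = g := by
  have h1 := congrArg (fun u => (PFunctor.M.dest u).1) h
  simp only [Tm.node, PFunctor.M.dest_mk] at h1
  exact Sum.inr.inj h1

lemma node_inj_args {f : Sg.Sym} {ss ts : Fin (Sg.ar f) → Tm Sg X}
    (h : Tm.node f ss = Tm.node f ts) : ss = ts := by
  have h' : (PFunctor.M.mk ⟨Sum.inr f, ss⟩ : Tm Sg X) = PFunctor.M.mk ⟨Sum.inr f, ts⟩ := h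
  have h1 := PFunctor.M.mk_inj h'
  injection h1 with h2 h3

lemma var_inj {x y : X} (h : (Tm.var x : Tm Sg X) = Tm.var y) : x = y := by
  have h1 := congrArg (fun u => (PFunctor.M.dest u).1) h
  simp only [Tm.var, PFunctor.M.dest_mk] at h1
  exact Sum.inl.inj h1

lemma occurs_var_iff {x y : X} : Occurs x (Tm.var y : Tm Sg X) ↔ x = y := by
  constructor
  · intro h
    cases h with
    | here h => exact (var_inj h.symm)
    | deeper i h _ => exact absurd h.symm (node_ne_var _ _ _)
  · rintro rfl
    exact Occurs.here rfl

lemma occurs_node_iff {x : X} {f : Sg.Sym} {args : Fin (Sg.ar f) → Tm Sg X} :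
    Occurs x (Tm.node f args) ↔ ∃ i, Occurs x (args i) := by
  constructor
  · intro h
    cases h with
    | here h => exact absurd h (node_ne_var _ _ _)
    | deeper i h hocc =>
      obtain rfl := node_inj_sym h
      obtain rfl := node_inj_args h
      exact ⟨i, hocc⟩
  · rintro ⟨i, h⟩
    exact Occurs.deeper i rfl h

/-! ### The TRS with rules `f(x,x) → D`, `a → C(a)`, `b → C(b)` -/

inductive SymFD : Type
  | f : SymFD
  | C : SymFD
  | a : SymFD
  | b : SymFD
  | D : SymFD

/-- The signature with a binary symbol `f`, a unary symbol `C` and constants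
`a`, `b`, `D`. -/
def SgFD : Signature :=
  ⟨SymFD, fun s => match s with | .f => 2 | .C => 1 | .a => 0 | .b => 0 | .D => 0⟩

def vx : Tm SgFD ℕ := Tm.var 0
def tmA : Tm SgFD ℕ := Tm.node SymFD.a Fin.elim0
def tmB : Tm SgFD ℕ := Tm.node SymFD.b Fin.elim0
def tmD : Tm SgFD ℕ := Tm.node SymFD.D Fin.elim0
def tmC (u : Tm SgFD ℕ) : Tm SgFD ℕ := Tm.node SymFD.C (fun _ => u)
def tmF (u v : Tm SgFD ℕ) : Tm SgFD ℕ := Tm.node SymFD.f ![u, v]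

/-- The TRS with the rules `f(x,x) → D`, `a → C(a)`, `b → C(b)`. -/
def RFD : TRS SgFD ℕ where
  rules := {(tmF vx vx, tmD), (tmA, tmC tmA), (tmB, tmC tmB)}
  lhs_not_var := by
    rintro l r hm x
    simp only [Set.mem_insert_iff, Set.mem_singleton_iff, Prod.mk.injEq] at hm
    rcases hm with ⟨rfl, rfl⟩ | ⟨rfl, rfl⟩ | ⟨rfl, rfl⟩ <;> exact node_ne_var _ _ _
  vars_lhs := by
    rintro l r hm x h
    simp only [Set.mem_insert_iff, Set.mem_singleton_iff, Prod.mk.injEq] at hm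
    rcases hm with ⟨rfl, rfl⟩ | ⟨rfl, rfl⟩ | ⟨rfl, rfl⟩
    · rcases occurs_node_iff.mp h with ⟨i, h⟩
      exact i.elim0
    · rcases occurs_node_iff.mp h with ⟨i, h⟩
      exact h
    · rcases occurs_node_iff.mp h with ⟨i, h⟩
      exact h

/-- The monotone operator `S ↦ (→)* ∘ ↓S`. -/
def oredHom (R : TRS Sg X) : TRel Sg X →o TRel Sg X where
  toFun S := relComp (Relation.ReflTransGen (Step R)) (liftRel S)
  monotone' := by
    intro S S' h a c hac
    rcases hac with ⟨b, h1, h2⟩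
    exact ⟨b, h1, liftRel_mono h _ _ h2⟩

/-- The relation `→^{≤ω} := νS.((→)* ∘ ↓S)` of reductions of length at most `ω`. -/
def ored (R : TRS Sg X) : TRel Sg X := OrderHom.gfp (oredHom R)

/-! Every finite reduct of `f(a,b)` has the form `f(Cⁿ(a), Cᵐ(b))`: its two arguments never
become equal, so the rule `f(x,x) → D` never fires and the root symbol stays `f`. Unfolding the
greatest fixed point once, `f(a,b) →^{≤ω} D` would give a finite reduct `u` of `f(a,b)` with
`u ↓(→^{≤ω}) D`; but the lifting `↓` keeps the root symbol, and `D ≠ f`. -/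

lemma Tm.eq_of_dest_eq {s t : Tm Sg X} (h : PFunctor.M.dest s = PFunctor.M.dest t) : s = t := by
  rw [← PFunctor.M.mk_dest s, ← PFunctor.M.mk_dest t, h]

lemma corec_substAux_inr (σ : X → Tm Sg X) (t : Tm Sg X) :
    PFunctor.M.corec (substAux σ) (Sum.inr t) = t := by
  apply PFunctor.M.bisim (fun x y => x = PFunctor.M.corec (substAux σ) (Sum.inr y))
  · rintro x y rfl
    refine ⟨(PFunctor.M.dest y).1, _, (PFunctor.M.dest y).2, ?_, rfl, fun i => rfl⟩
    rw [PFunctor.M.dest_corec]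
    rfl
  · rfl

lemma subst_var (σ : X → Tm Sg X) (x : X) : subst σ (Tm.var x) = σ x := by
  apply Tm.eq_of_dest_eq
  rw [subst, PFunctor.M.dest_corec]
  refine Sigma.ext rfl (heq_of_eq ?_)
  funext b
  exact corec_substAux_inr σ _

lemma subst_node (σ : X → Tm Sg X) (f : Sg.Sym) (args : Fin (Sg.ar f) → Tm Sg X) :
    subst σ (Tm.node f args) = Tm.node f (fun i => subst σ (args i)) := by
  apply Tm.eq_of_dest_eq
  rw [subst, PFunctor.M.dest_corec]
  rfl

lemma subst_node_of_ar_eq_zero (σ : X → Tm Sg X) {f : Sg.Sym} (hf : Sg.ar f = 0)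
    (args : Fin (Sg.ar f) → Tm Sg X) : subst σ (Tm.node f args) = Tm.node f args := by
  rw [subst_node]
  congr 1
  funext i
  exact absurd i.isLt (by omega)

lemma StepAt.node_inv {Q : TRel Sg X} {p : List ℕ} {f : Sg.Sym} {ss : Fin (Sg.ar f) → Tm Sg X}
    {t : Tm Sg X} (h : StepAt Q p (Tm.node f ss) t) :
    Q (Tm.node f ss) t ∨ ∃ (i : Fin (Sg.ar f)) (ts : Fin (Sg.ar f) → Tm Sg X) (q : List ℕ),
      t = Tm.node f ts ∧ StepAt Q q (ss i) (ts i) ∧ ∀ j, j ≠ i → ss j = ts j := by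
  generalize hs : Tm.node f ss = s at h
  cases h with
  | here hq => exact Or.inl (hs ▸ hq)
  | deeper i hstep hrest =>
    obtain rfl := node_inj_sym hs
    obtain rfl := node_inj_args hs
    exact Or.inr ⟨i, _, _, rfl, hstep, hrest⟩

lemma liftRel_node_sym_eq {R : TRel Sg X} {f g : Sg.Sym} {ss : Fin (Sg.ar f) → Tm Sg X}
    {ts : Fin (Sg.ar g) → Tm Sg X} (h : liftRel R (Tm.node f ss) (Tm.node g ts)) : f = g := by
  rcases h with h | ⟨_, _, _, hs, ht, _⟩
  · exact node_inj_sym h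
  · exact (node_inj_sym hs).trans (node_inj_sym ht).symm

lemma ored_iff {R : TRS Sg X} {s t : Tm Sg X} :
    ored R s t ↔ ∃ u, ReflTransGen (Step R) s u ∧ liftRel (ored R) u t :=
  Iff.of_eq (congrFun (congrFun (OrderHom.map_gfp (oredHom R)).symm s) t)

lemma tmC_injective : Function.Injective tmC := fun _ _ h =>
  congrFun (node_inj_args h) ⟨0, Nat.zero_lt_one⟩

lemma tmF_inj {u v u' v' : Tm SgFD ℕ} (h : tmF u v = tmF u' v') : u = u' ∧ v = v' :=
  ⟨congrFun (node_inj_args h) (0 : Fin 2), congrFun (node_inj_args h) (1 : Fin 2)⟩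

lemma node_C_eq_tmC (ts : Fin (SgFD.ar SymFD.C) → Tm SgFD ℕ) :
    Tm.node SymFD.C ts = tmC (ts ⟨0, Nat.zero_lt_one⟩) := by
  rw [tmC]
  congr 1
  funext j
  fin_cases j
  rfl

lemma node_F_eq_tmF (ts : Fin (SgFD.ar SymFD.f) → Tm SgFD ℕ) :
    Tm.node SymFD.f ts = tmF (ts (0 : Fin 2)) (ts (1 : Fin 2)) := by
  rw [tmF]
  congr 1
  funext j
  fin_cases j <;> rfl

lemma subst_tmF (σ : ℕ → Tm SgFD ℕ) (u v : Tm SgFD ℕ) :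
    subst σ (tmF u v) = tmF (subst σ u) (subst σ v) :=
  (subst_node σ _ _).trans (node_F_eq_tmF _)

lemma subst_tmC (σ : ℕ → Tm SgFD ℕ) (u : Tm SgFD ℕ) : subst σ (tmC u) = tmC (subst σ u) :=
  (subst_node σ _ _).trans (node_C_eq_tmC _)

lemma rootStep_RFD_iff {s t : Tm SgFD ℕ} :
    RootStep RFD s t ↔
      (∃ u, s = tmF u u ∧ t = tmD) ∨ (s = tmA ∧ t = tmC tmA) ∨ (s = tmB ∧ t = tmC tmB) := by
  have hA σ : subst σ tmA = tmA := subst_node_of_ar_eq_zero σ rfl _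
  have hB σ : subst σ tmB = tmB := subst_node_of_ar_eq_zero σ rfl _
  have hD σ : subst σ tmD = tmD := subst_node_of_ar_eq_zero σ rfl _
  constructor
  · rintro ⟨l, r, hlr, σ, rfl, rfl⟩
    simp only [RFD, Set.mem_insert_iff, Set.mem_singleton_iff, Prod.mk.injEq] at hlr
    rcases hlr with ⟨rfl, rfl⟩ | ⟨rfl, rfl⟩ | ⟨rfl, rfl⟩
    · exact Or.inl ⟨σ 0, by rw [subst_tmF, vx, subst_var], hD σ⟩
    · exact Or.inr (Or.inl ⟨hA σ, by rw [subst_tmC, hA]⟩)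
    · exact Or.inr (Or.inr ⟨hB σ, by rw [subst_tmC, hB]⟩)
  · rintro (⟨u, rfl, rfl⟩ | ⟨rfl, rfl⟩ | ⟨rfl, rfl⟩)
    · exact ⟨_, _, Or.inl rfl, fun _ => u, by rw [subst_tmF, vx, subst_var], (hD _).symm⟩
    · exact ⟨_, _, Or.inr (Or.inl rfl), fun _ => tmA, (hA _).symm, by rw [subst_tmC, hA]⟩
    · exact ⟨_, _, Or.inr (Or.inr rfl), fun _ => tmB, (hB _).symm, by rw [subst_tmC, hB]⟩

lemma not_rootStep_tmC (u t : Tm SgFD ℕ) : ¬ RootStep RFD (tmC u) t := by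
  rw [rootStep_RFD_iff]
  rintro (⟨_, h, _⟩ | ⟨h, _⟩ | ⟨h, _⟩) <;> exact SymFD.noConfusion (node_inj_sym h)

lemma not_rootStep_tmF_of_ne {u v : Tm SgFD ℕ} (huv : u ≠ v) (t : Tm SgFD ℕ) :
    ¬ RootStep RFD (tmF u v) t := by
  rw [rootStep_RFD_iff]
  rintro (⟨w, h, _⟩ | ⟨h, _⟩ | ⟨h, _⟩)
  · obtain ⟨rfl, rfl⟩ := tmF_inj h
    exact huv rfl
  all_goals exact SymFD.noConfusion (node_inj_sym h)

lemma stepAt_tmA {p : List ℕ} {t : Tm SgFD ℕ} (h : StepAt (RootStep RFD) p tmA t) :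
    t = tmC tmA := by
  rcases StepAt.node_inv h with hroot | ⟨i, -⟩
  · rcases rootStep_RFD_iff.mp hroot with ⟨_, h, _⟩ | ⟨_, rfl⟩ | ⟨h, _⟩
    · exact SymFD.noConfusion (node_inj_sym h)
    · rfl
    · exact SymFD.noConfusion (node_inj_sym h)
  · exact i.elim0

lemma stepAt_tmB {p : List ℕ} {t : Tm SgFD ℕ} (h : StepAt (RootStep RFD) p tmB t) :
    t = tmC tmB := by
  rcases StepAt.node_inv h with hroot | ⟨i, -⟩
  · rcases rootStep_RFD_iff.mp hroot with ⟨_, h, _⟩ | ⟨h, _⟩ | ⟨_, rfl⟩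
    · exact SymFD.noConfusion (node_inj_sym h)
    · exact SymFD.noConfusion (node_inj_sym h)
    · rfl
  · exact i.elim0

lemma stepAt_tmC_iterate {u : Tm SgFD ℕ}
    (hu : ∀ {p : List ℕ} {t : Tm SgFD ℕ}, StepAt (RootStep RFD) p u t → t = tmC u) (n : ℕ)
    {p : List ℕ} {t : Tm SgFD ℕ} (h : StepAt (RootStep RFD) p (tmC^[n] u) t) :
    t = tmC^[n + 1] u := by
  induction n generalizing p t with
  | zero => exact hu h
  | succ n ih =>
    rw [Function.iterate_succ_apply'] at h ⊢
    rcases StepAt.node_inv h with hroot | ⟨i, ts, q, rfl, hstep, -⟩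
    · exact absurd hroot (not_rootStep_tmC _ _)
    · obtain rfl : i = ⟨0, Nat.zero_lt_one⟩ := Fin.ext (Nat.lt_one_iff.mp i.isLt)
      rw [node_C_eq_tmC, ih hstep, Function.iterate_succ_apply' _ n]

lemma tmC_iterate_tmA_ne_tmB : ∀ n m : ℕ, tmC^[n] tmA ≠ tmC^[m] tmB
  | 0, 0, h => SymFD.noConfusion (node_inj_sym h)
  | 0, m + 1, h => by
    rw [Function.iterate_succ_apply'] at h
    exact SymFD.noConfusion (node_inj_sym h)
  | n + 1, 0, h => by
    rw [Function.iterate_succ_apply'] at h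
    exact SymFD.noConfusion (node_inj_sym h)
  | n + 1, m + 1, h => by
    rw [Function.iterate_succ_apply', Function.iterate_succ_apply'] at h
    exact tmC_iterate_tmA_ne_tmB n m (tmC_injective h)

def IsFCnaCmb (t : Tm SgFD ℕ) : Prop := ∃ n m : ℕ, t = tmF (tmC^[n] tmA) (tmC^[m] tmB)

lemma IsFCnaCmb.step {s t : Tm SgFD ℕ} (hs : IsFCnaCmb s) (h : Step RFD s t) :
    IsFCnaCmb t := by
  obtain ⟨n, m, rfl⟩ := hs
  obtain ⟨p, h⟩ := h
  rcases StepAt.node_inv h with hroot | ⟨i, ts, q, rfl, hstep, hrest⟩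
  · exact absurd hroot (not_rootStep_tmF_of_ne (tmC_iterate_tmA_ne_tmB n m) _)
  · rw [node_F_eq_tmF]
    obtain ⟨_ | _ | _, hi⟩ := i
    · exact ⟨n + 1, m, congrArg₂ tmF (stepAt_tmC_iterate stepAt_tmA n hstep)
        (hrest (1 : Fin 2) (Fin.ne_of_val_ne one_ne_zero)).symm⟩
    · exact ⟨n, m + 1, congrArg₂ tmF (hrest (0 : Fin 2) (Fin.ne_of_val_ne zero_ne_one)).symm
        (stepAt_tmC_iterate stepAt_tmB m hstep)⟩
    · exact absurd hi (by change ¬ _ < 2; omega)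

lemma IsFCnaCmb.reflTransGen {s t : Tm SgFD ℕ} (hs : IsFCnaCmb s)
    (h : ReflTransGen (Step RFD) s t) : IsFCnaCmb t := by
  induction h with
  | refl => exact hs
  | tail _ hstep ih => exact ih.step hstep

/-- For the TRS `{f(x,x) → D, a → C(a), b → C(b)}`, the infinitary
reduction `f(a,b) →∞ D` cannot be compressed to length at most `ω`:
`¬(f(a,b) →^{≤ω} D)`. -/
theorem not_compressible_example : ¬ ored RFD (tmF tmA tmB) tmD := by
  intro h
  obtain ⟨u, hred, hlift⟩ := ored_iff.mp h
  obtain ⟨n, m, rfl⟩ := IsFCnaCmb.reflTransGen ⟨0, 0, rfl⟩ hred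
  exact SymFD.noConfusion (liftRel_node_sym_eq hlift)
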